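/- arXiv:1102.4359 — 5 statements merged into one kernel-verified Lean document; each statement's English description precedes it below -/
import Mathlib

section
/- Let μ be a nonnegative measure on (0,∞) with ∫ min(1, 1/λ) dμ(λ) < ∞ and define φ(D) = ∫_0^∞ (1 − exp(−λD))/λ dμ(λ). Then for every integer p ≥ 1 and every finite collection of points x_1,...,x_n ∈ ℝ^p, there exist points y_1,...,y_n in a real Hilbert space (e.g. ℓ²(ℕ, ℝ)) such that ‖y_i − y_j‖² = φ(‖x_i − x_j‖²) for all i, j. -/
open Finset MeasureTheory Set

/-- `d` is realizable as the matrix of squared distances between `n` points of a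
real Hilbert space. -/
def IsHilbertSqDistMatrix {n : ℕ} (d : Fin n → Fin n → ℝ) : Prop :=
  ∃ (H : Type) (inst : NormedAddCommGroup H),
    letI := inst
    ∃ (_ : InnerProductSpace ℝ H) (_ : CompleteSpace H) (y : Fin n → H),
      ∀ i j, ‖y i - y j‖ ^ 2 = d i j

/-!
For every `λ > 0` the Gaussian kernel `exp (-λ ‖x - y‖²)` is positive semidefinite: it is the
entrywise exponential of the positive semidefinite matrix `2λ ⟪xᵢ, xⱼ⟫`, conjugated by a
diagonal matrix, and entrywise powers of positive semidefinite matrices are positive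
semidefinite by the Schur product theorem. Centering this kernel at the origin shows that
`(1 - e^{-λ‖x‖²}) + (1 - e^{-λ‖y‖²}) - (1 - e^{-λ‖x - y‖²})` is a positive semidefinite kernel,
and integrating against `dμ(λ) / λ` shows that
`Gᵢⱼ = (φ ‖xᵢ‖² + φ ‖xⱼ‖² - φ ‖xᵢ - xⱼ‖²) / 2` is positive semidefinite. Hence `G` is the Gram
matrix of vectors `yᵢ`, and `‖yᵢ - yⱼ‖² = Gᵢᵢ + Gⱼⱼ - 2 Gᵢⱼ = φ ‖xᵢ - xⱼ‖²` because `φ 0 = 0`.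
-/

namespace Matrix

section RCLike

open scoped ComplexOrder MatrixOrder

variable {𝕜 ι : Type*} [RCLike 𝕜] [Fintype ι]

theorem PosSemidef.exists_gram_eq {A : Matrix ι ι 𝕜} (hA : A.PosSemidef) :
    ∃ v : ι → EuclideanSpace 𝕜 ι, gram 𝕜 v = A := by
  classical
  obtain ⟨B, rfl⟩ := CStarAlgebra.nonneg_iff_eq_star_mul_self.mp hA.nonneg
  refine ⟨fun i => WithLp.toLp 2 fun k => B k i, ?_⟩
  ext i j
  simp [gram_apply, PiLp.inner_apply, mul_apply, star_eq_conjTranspose, mul_comm]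

theorem PosSemidef.map_pow {A : Matrix ι ι 𝕜} (hA : A.PosSemidef) (k : ℕ) :
    (A.map (· ^ k)).PosSemidef := by
  induction k with
  | zero =>
    convert posSemidef_vecMulVec_self_star (1 : ι → 𝕜) using 1
    ext
    simp [vecMulVec]
  | succ k ih =>
    convert ih.hadamard hA using 1
    ext
    simp [pow_succ]

end RCLike

variable {ι : Type*} [Fintype ι]

theorem PosSemidef.centered {R : Type*} [Ring R] [PartialOrder R] [StarRing R]
    {K : Matrix (Option ι) (Option ι) R} (hK : K.PosSemidef) :
    (of fun i j =>
      K (some i) (some j) - K (some i) none - K none (some j) + K none none).PosSemidef := by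
  classical
  -- `P` maps `c : ι → R` to the coefficients `c` at `some` and `-∑ c` at `none`.
  let P : Matrix (Option ι) ι R := of fun o j => o.elim (-1) fun i => (1 : Matrix ι ι R) i j
  convert hK.conjTranspose_mul_mul_same P using 1
  ext i j
  simp only [of_apply, one_apply, mul_apply, conjTranspose_apply, Fintype.sum_option,
    Option.elim_none, star_neg, star_one, neg_mul, one_mul, Option.elim_some, apply_ite star,
    star_zero, ite_mul, zero_mul, sum_ite_eq', Finset.mem_univ, ↓reduceIte, mul_neg, mul_one,
    neg_add_rev, neg_neg, mul_ite, mul_zero, P]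
  abel

theorem PosSemidef.of_hasSum {β : Type*} {f : β → Matrix ι ι ℝ} {A : Matrix ι ι ℝ}
    (hf : HasSum f A) (h : ∀ b, (f b).PosSemidef) : A.PosSemidef := by
  refine .of_dotProduct_mulVec_nonneg ?_ fun x => ?_
  · have hf' : HasSum f Aᴴ := by
      simpa only [(h _).isHermitian.eq] using hf.matrix_conjTranspose
    exact hf'.unique hf
  · let q : Matrix ι ι ℝ →+ ℝ := AddMonoidHom.mk' (fun M => star x ⬝ᵥ M *ᵥ x) fun M N => by
      simp [add_mulVec, dotProduct_add]
    have hq : Continuous q := show Continuous fun M : Matrix ι ι ℝ => star x ⬝ᵥ M *ᵥ x by fun_prop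
    exact (hf.map q hq).nonneg fun b => (h b).dotProduct_mulVec_nonneg x

theorem PosSemidef.map_exp {A : Matrix ι ι ℝ} (hA : A.PosSemidef) :
    (A.map Real.exp).PosSemidef := by
  refine PosSemidef.of_hasSum (f := fun k => (k.factorial⁻¹ : ℝ) • A.map (· ^ k)) ?_
    fun k => (hA.map_pow k).smul (by positivity)
  refine Pi.hasSum.2 fun i => Pi.hasSum.2 fun j => ?_
  simpa [Real.exp_eq_exp_ℝ, div_eq_inv_mul] using NormedSpace.expSeries_div_hasSum_exp (A i j)

theorem posSemidef_integral {α : Type*} [MeasurableSpace α] {ν : Measure α}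
    {M : α → Matrix ι ι ℝ} (hint : ∀ i j, Integrable (fun a => M a i j) ν)
    (hM : ∀ᵐ a ∂ν, (M a).PosSemidef) : (of fun i j => ∫ a, M a i j ∂ν).PosSemidef := by
  refine .of_dotProduct_mulVec_nonneg ?_ fun x => ?_
  · ext i j
    simpa using integral_congr_ae (hM.mono fun a ha => ha.isHermitian.apply i j)
  · have hint' (i j : ι) : Integrable (fun a => x i * (M a i j * x j)) ν :=
      ((hint i j).mul_const _).const_mul _
    have hq : star x ⬝ᵥ (of fun i j => ∫ a, M a i j ∂ν) *ᵥ x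
        = ∫ a, star x ⬝ᵥ M a *ᵥ x ∂ν := by
      simp only [dotProduct, mulVec, of_apply, star_trivial, Finset.mul_sum]
      rw [integral_finsetSum _ fun i _ => integrable_finsetSum _ fun j _ => hint' i j]
      refine Finset.sum_congr rfl fun i _ => ?_
      rw [integral_finsetSum _ fun j _ => hint' i j]
      simp only [integral_const_mul, integral_mul_const]
    rw [hq]
    exact integral_nonneg_of_ae (hM.mono fun a ha => ha.dotProduct_mulVec_nonneg x)

end Matrix

open Matrix

section Kernels

variable {ι E : Type*} [Fintype ι] [NormedAddCommGroup E] [InnerProductSpace ℝ E]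

theorem posSemidef_gaussian_kernel (z : ι → E) {t : ℝ} (ht : 0 ≤ t) :
    (of fun i j => Real.exp (-(t * ‖z i - z j‖ ^ 2))).PosSemidef := by
  classical
  let d : ι → ℝ := fun i => Real.exp (-(t * ‖z i‖ ^ 2))
  have hexp : (((2 * t) • gram ℝ z).map Real.exp).PosSemidef :=
    ((posSemidef_gram ℝ z).smul (by positivity)).map_exp
  -- `exp (-t ‖zᵢ - zⱼ‖²) = dᵢ * exp (2t ⟪zᵢ, zⱼ⟫) * dⱼ`
  convert hexp.mul_mul_conjTranspose_same (diagonal d) using 1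
  ext i j
  simp only [of_apply, diagonal_conjTranspose, star_trivial, diagonal_mul, mul_diagonal, map_apply,
    Matrix.smul_apply, gram_apply, smul_eq_mul, d, ← Real.exp_add, norm_sub_sq_real]
  ring_nf

theorem posSemidef_one_sub_exp_kernel (x : ι → E) {t : ℝ} (ht : 0 ≤ t) :
    (of fun i j => (1 - Real.exp (-(t * ‖x i‖ ^ 2))) + (1 - Real.exp (-(t * ‖x j‖ ^ 2)))
      - (1 - Real.exp (-(t * ‖x i - x j‖ ^ 2)))).PosSemidef := by
  convert (posSemidef_gaussian_kernel (fun o => o.elim 0 x) ht).centered using 1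
  ext i j
  simp only [of_apply, Option.elim_some, Option.elim_none, sub_zero, zero_sub, norm_neg, sub_self,
    norm_zero, ne_eq, OfNat.ofNat_ne_zero, not_false_eq_true, zero_pow, mul_zero, neg_zero,
    Real.exp_zero]
  ring

end Kernels

theorem one_sub_exp_neg_mul_div_le {l : ℝ} (hl : 0 < l) (D : ℝ) :
    (1 - Real.exp (-(l * D))) / l ≤ max 1 D * min 1 (1 / l) := by
  rcases le_total l 1 with h | h
  · rw [min_eq_left (one_le_one_div hl h), mul_one, div_le_iff₀ hl]
    nlinarith [Real.add_one_le_exp (-(l * D)), le_max_right 1 D]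
  · rw [min_eq_right (div_le_one_of_le₀ h hl.le), ← mul_div_assoc, mul_one]
    gcongr
    linarith [Real.exp_pos (-(l * D)), le_max_left 1 D]

theorem integrableOn_one_sub_exp_neg_mul_div {μ : Measure ℝ}
    (hμ : ∫⁻ l in Ioi (0 : ℝ), ENNReal.ofReal (min 1 (1 / l)) ∂μ ≠ ⊤) {D : ℝ} (hD : 0 ≤ D) :
    IntegrableOn (fun l => (1 - Real.exp (-(l * D))) / l) (Ioi 0) μ := by
  have hmin : IntegrableOn (fun l : ℝ => min 1 (1 / l)) (Ioi 0) μ := by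
    refine ⟨by fun_prop, (hasFiniteIntegral_iff_ofReal ?_).2 hμ.lt_top⟩
    filter_upwards [ae_restrict_mem measurableSet_Ioi] with l (hl : 0 < l)
    positivity
  refine (hmin.const_mul (max 1 D)).mono' (Measurable.aestronglyMeasurable (by fun_prop)) ?_
  filter_upwards [ae_restrict_mem measurableSet_Ioi] with l (hl : 0 < l)
  have : Real.exp (-(l * D)) ≤ 1 := Real.exp_le_one_iff.2 (by nlinarith)
  rw [Real.norm_of_nonneg (div_nonneg (by linarith) hl.le)]
  exact one_sub_exp_neg_mul_div_le hl D

theorem isHilbertSqDistMatrix_of_posSemidef {n : ℕ} {d : Fin n → Fin n → ℝ} (a : Fin n → ℝ)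
    (hd : ∀ i, d i i = 0) (h : (of fun i j => (a i + a j - d i j) / 2).PosSemidef) :
    IsHilbertSqDistMatrix d := by
  obtain ⟨v, hv⟩ := h.exists_gram_eq
  have hinner (i j : Fin n) : inner ℝ (v i) (v j) = (a i + a j - d i j) / 2 := by
    simpa using congr_fun₂ hv i j
  refine ⟨EuclideanSpace ℝ (Fin n), inferInstance, inferInstance, inferInstance, v, fun i j => ?_⟩
  rw [norm_sub_sq_real, ← real_inner_self_eq_norm_sq, ← real_inner_self_eq_norm_sq, hinner,
    hinner, hinner, hd, hd]
  ring

theorem schoenberg_forward_general (μ : Measure ℝ)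
    (hμ : ∫⁻ l in Ioi (0 : ℝ), ENNReal.ofReal (min 1 (1 / l)) ∂μ ≠ ⊤)
    (φ : ℝ → ℝ)
    (hφ : ∀ D : ℝ, φ D = ∫ l in Ioi (0 : ℝ), (1 - Real.exp (-(l * D))) / l ∂μ)
    (p n : ℕ) (x : Fin n → EuclideanSpace ℝ (Fin p)) :
    IsHilbertSqDistMatrix (fun i j => φ (‖x i - x j‖ ^ 2)) := by
  let F (D l : ℝ) : ℝ := (1 - Real.exp (-(l * D))) / l
  have hF (v : EuclideanSpace ℝ (Fin p)) : IntegrableOn (F (‖v‖ ^ 2)) (Ioi 0) μ :=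
    integrableOn_one_sub_exp_neg_mul_div hμ (sq_nonneg _)
  let M (l : ℝ) : Matrix (Fin n) (Fin n) ℝ :=
    of fun i j => (F (‖x i‖ ^ 2) l + F (‖x j‖ ^ 2) l - F (‖x i - x j‖ ^ 2) l) / 2
  have hM (l : ℝ) (hl : 0 < l) : (M l).PosSemidef := by
    convert (posSemidef_one_sub_exp_kernel x hl.le).smul (inv_nonneg.2 (by positivity : 0 ≤ 2 * l))
      using 1
    ext i j
    simp only [M, F, of_apply, Matrix.smul_apply, smul_eq_mul]
    field_simp
  have hG := posSemidef_integral (ν := μ.restrict (Ioi 0)) (M := M)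
    (fun i j => (((hF _).add (hF _)).sub (hF _)).div_const 2)
    (ae_restrict_of_forall_mem measurableSet_Ioi hM)
  refine isHilbertSqDistMatrix_of_posSemidef (fun i => φ (‖x i‖ ^ 2)) (fun i => by simp [hφ]) ?_
  convert hG using 2
  ext i j
  simp only [M, of_apply]
  rw [integral_div, integral_sub, integral_add, hφ, hφ, hφ]
  exacts [hF _, hF _, (hF _).add (hF _), hF _]

/-- **Schoenberg's theorem, forward direction.** A function of the form
`φ(D) = ∫ (1 - exp (-λ D))/λ dμ(λ)` with `μ` a nonnegative measure on `(0,∞)`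
satisfying `∫ min(1, 1/λ) dμ(λ) < ∞` maps every matrix of squared Euclidean distances
between points of `ℝ^p` to a matrix of squared distances between points of a real
Hilbert space. -/
theorem schoenberg_forward (μ : Measure ℝ)
    (hμ : ∫⁻ l in Ioi (0 : ℝ), ENNReal.ofReal (min 1 (1 / l)) ∂μ ≠ ⊤)
    (φ : ℝ → ℝ)
    (hφ : ∀ D : ℝ, φ D = ∫ l in Ioi (0 : ℝ), (1 - Real.exp (-(l * D))) / l ∂μ)
    (p n : ℕ) (hp : 1 ≤ p) (x : Fin n → EuclideanSpace ℝ (Fin p)) :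
    IsHilbertSqDistMatrix (fun i j => φ (‖x i - x j‖ ^ 2)) :=
  schoenberg_forward_general μ hμ φ hφ p n x
end

section
/- Let 0 < q < 1. For every integer p ≥ 1 and every finite collection of points x_1,...,x_n ∈ ℝ^p, there exist points y_1,...,y_n in a real Hilbert space such that ‖y_i − y_j‖² = ‖x_i − x_j‖^{2q} for all i, j. That is, the power transformation φ(D) = D^q is a Schoenberg transformation. -/
/-!
For `0 < q < 1` and `D ≥ 0` one has `D ^ q = c ∫₀^∞ s ^ (-1 - q) (1 - exp (-s D)) ds`, and for
fixed `s > 0` the quantity `1 - exp (-s ‖x - y‖²)` is, up to a factor `s ^ (-p / 2)`, the squared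
`L²`-distance of the Gaussians `t ↦ exp (-2 s ‖x - t‖²)` and `t ↦ exp (-2 s ‖y - t‖²)`. Weighting
these Gaussians by a power of `s` therefore maps `x` to a function on `(0, ∞) × ℝ^p` such that the
squared `L²`-distance of the images of `x` and `y` is `c⁻¹ ‖x - y‖ ^ (2 q)`. The images themselves
are not square integrable, but their differences with the image of `0` are, and a rescaling
removes the constant.
-/
open Finset Set

open MeasureTheory Real Module

theorem IsHilbertSqDistMatrix.const_mul {n : ℕ} {d : Fin n → Fin n → ℝ}
    (h : IsHilbertSqDistMatrix d) {c : ℝ} (hc : 0 ≤ c) :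
    IsHilbertSqDistMatrix fun i j => c * d i j := by
  obtain ⟨H, _, _, _, y, hy⟩ := h
  refine ⟨H, _, inferInstance, inferInstance, fun i => √c • y i, fun i j => ?_⟩
  rw [← smul_sub, norm_smul, mul_pow, norm_of_nonneg (sqrt_nonneg c), sq_sqrt hc, hy]

theorem isHilbertSqDistMatrix_integral_sq_sub {α : Type} [MeasurableSpace α] (μ : Measure α)
    {n : ℕ} (f : Fin n → α → ℝ) (hf : ∀ i, MemLp (f i) 2 μ) :
    IsHilbertSqDistMatrix fun i j => ∫ a, (f i a - f j a) ^ 2 ∂μ := by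
  refine ⟨Lp ℝ 2 μ, inferInstance, inferInstance, inferInstance, fun i => (hf i).toLp,
    fun i j => ?_⟩
  have hsub : ⇑((hf i).toLp - (hf j).toLp) =ᵐ[μ] fun a => f i a - f j a := by
    filter_upwards [Lp.coeFn_sub (hf i).toLp (hf j).toLp, (hf i).coeFn_toLp,
      (hf j).coeFn_toLp] with a h h_i h_j
    rw [h, Pi.sub_apply, h_i, h_j]
  rw [← real_inner_self_eq_norm_sq, L2.inner_def]
  refine integral_congr_ae (hsub.mono fun a ha => ?_)
  simp only [ha, real_inner_self_eq_norm_sq, Real.norm_eq_abs, sq_abs]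

noncomputable def oneSubExpIntegral (q : ℝ) : ℝ := ∫ s in Ioi (0 : ℝ), s ^ (-1 - q) * (1 - exp (-s))

section OneSubExpIntegral

variable {q : ℝ}

theorem integrableOn_rpow_mul_one_sub_exp (hq0 : 0 < q) (hq1 : q < 1) {c : ℝ} (hc : 0 ≤ c) :
    IntegrableOn (fun s : ℝ => s ^ (-1 - q) * (1 - exp (-(s * c)))) (Ioi 0) := by
  have hmeas : AEStronglyMeasurable (fun s : ℝ => s ^ (-1 - q) * (1 - exp (-(s * c)))) :=
    by fun_prop
  have hnonneg : ∀ s : ℝ, 0 < s → 0 ≤ 1 - exp (-(s * c)) := fun s hs => by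
    simp only [sub_nonneg, exp_le_one_iff, neg_nonpos]; positivity
  rw [← Ioc_union_Ioi_eq_Ioi zero_le_one]
  refine IntegrableOn.union ?_ ?_
  · -- near `0`, `1 - exp (-(s * c)) ≤ s * c` tames the singularity
    have hdom : IntegrableOn (fun s : ℝ => c * s ^ (-q)) (Ioc 0 1) :=
      ((intervalIntegrable_iff_integrableOn_Ioc_of_le zero_le_one).1
        (intervalIntegral.intervalIntegrable_rpow' (by linarith))).const_mul c
    refine hdom.mono' hmeas.restrict <| (ae_restrict_iff' measurableSet_Ioc).2 <|
      ae_of_all _ fun s ⟨hs, _⟩ => ?_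
    rw [norm_of_nonneg (mul_nonneg (by positivity) (hnonneg s hs))]
    calc s ^ (-1 - q) * (1 - exp (-(s * c))) ≤ s ^ (-1 - q) * (s * c) := by
          gcongr; linarith [add_one_le_exp (-(s * c))]
      _ = c * s ^ (-q) := by
          rw [show -q = -1 - q + 1 by ring, rpow_add_one hs.ne']; ring
  · have hdom : IntegrableOn (fun s : ℝ => s ^ (-1 - q)) (Ioi 1) :=
      integrableOn_Ioi_rpow_of_lt (by linarith) one_pos
    refine hdom.mono' hmeas.restrict <| (ae_restrict_iff' measurableSet_Ioi).2 <|
      ae_of_all _ fun s (hs : 1 < s) => ?_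
    have hs0 : 0 < s := one_pos.trans hs
    rw [norm_of_nonneg (mul_nonneg (by positivity) (hnonneg s hs0))]
    exact mul_le_of_le_one_right (by positivity) (by linarith [exp_pos (-(s * c))])

theorem oneSubExpIntegral_pos (hq0 : 0 < q) (hq1 : q < 1) : 0 < oneSubExpIntegral q := by
  have hint := integrableOn_rpow_mul_one_sub_exp hq0 hq1 zero_le_one
  simp only [mul_one] at hint
  have hpos : ∀ s ∈ Ioi (0 : ℝ), 0 < s ^ (-1 - q) * (1 - exp (-s)) := fun s (hs : 0 < s) =>
    mul_pos (by positivity) (by simpa using hs)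
  rw [oneSubExpIntegral, setIntegral_pos_iff_support_of_nonneg_ae
    ((ae_restrict_iff' measurableSet_Ioi).2 (ae_of_all _ fun s hs => (hpos s hs).le)) hint,
    inter_eq_right.2 fun s hs => Function.mem_support.2 (hpos s hs).ne', volume_Ioi]
  exact ENNReal.zero_lt_top

theorem integral_rpow_mul_one_sub_exp (hq : q ≠ 0) {D : ℝ} (hD : 0 ≤ D) :
    ∫ s in Ioi (0 : ℝ), s ^ (-1 - q) * (1 - exp (-(s * D))) = D ^ q * oneSubExpIntegral q := by
  rcases hD.eq_or_lt with rfl | hD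
  · simp [zero_rpow hq]
  -- substitute `u = D * s`
  have hscale : EqOn (fun s : ℝ => s ^ (-1 - q) * (1 - exp (-(s * D))))
      (fun s => D ^ (1 + q) * ((D * s) ^ (-1 - q) * (1 - exp (-(D * s))))) (Ioi 0) :=
    fun s (hs : 0 < s) => by
      dsimp only
      rw [mul_rpow hD.le hs.le, ← mul_assoc, ← mul_assoc, ← rpow_add hD, mul_comm s D]
      norm_num
  rw [setIntegral_congr_fun measurableSet_Ioi hscale, integral_const_mul,
    integral_comp_mul_left_Ioi (fun u => u ^ (-1 - q) * (1 - exp (-u))) 0 hD, mul_zero,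
    smul_eq_mul, ← oneSubExpIntegral, ← mul_assoc, ← rpow_neg_one, ← rpow_add hD]
  ring_nf

end OneSubExpIntegral

section Gaussian

variable {V : Type*} [NormedAddCommGroup V] [InnerProductSpace ℝ V] {b : ℝ}

theorem exp_neg_mul_norm_sub_sq_mul_exp (x y t : V) :
    exp (-b * ‖x - t‖ ^ 2) * exp (-b * ‖y - t‖ ^ 2)
      = exp (-(2 * b) * ‖t - (2 : ℝ)⁻¹ • (x + y)‖ ^ 2) * exp (-(b / 2) * ‖x - y‖ ^ 2) := by
  rw [← exp_add, ← exp_add]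
  congr 1
  have hpar := parallelogram_law_with_norm ℝ (x - t) (y - t)
  rw [show x - t + (y - t) = -(2 : ℝ) • (t - (2 : ℝ)⁻¹ • (x + y)) by module,
    sub_sub_sub_cancel_right, norm_smul, norm_neg, Real.norm_ofNat] at hpar
  linear_combination (b / 2) * hpar

variable [FiniteDimensional ℝ V] [MeasurableSpace V] [BorelSpace V]

theorem integrable_exp_neg_mul_norm_sq (hb : 0 < b) :
    Integrable fun v : V => exp (-b * ‖v‖ ^ 2) := by
  have h := (GaussianFourier.integrable_cexp_neg_mul_sq_norm_add (V := V) (b := (b : ℂ))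
    (by simpa using hb) 0 0).norm
  refine h.congr (ae_of_all _ fun v => ?_)
  simp only [zero_mul, add_zero, Complex.norm_exp]
  norm_cast

theorem integrable_exp_neg_mul_norm_sub_sq_mul_exp (hb : 0 < b) (x y : V) :
    Integrable fun t : V => exp (-b * ‖x - t‖ ^ 2) * exp (-b * ‖y - t‖ ^ 2) := by
  simp_rw [exp_neg_mul_norm_sub_sq_mul_exp x y]
  exact ((integrable_exp_neg_mul_norm_sq (by linarith)).comp_sub_right _).mul_const _

theorem integral_exp_neg_mul_norm_sub_sq_mul_exp (hb : 0 < b) (x y : V) :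
    ∫ t : V, exp (-b * ‖x - t‖ ^ 2) * exp (-b * ‖y - t‖ ^ 2)
      = (π / (2 * b)) ^ (finrank ℝ V / 2 : ℝ) * exp (-(b / 2) * ‖x - y‖ ^ 2) := by
  simp_rw [exp_neg_mul_norm_sub_sq_mul_exp x y]
  rw [integral_mul_const, integral_sub_right_eq_self (fun t => exp (-(2 * b) * ‖t‖ ^ 2)),
    GaussianFourier.integral_rexp_neg_mul_sq_norm (by linarith)]

theorem integrable_sq_sub_exp_neg_mul_norm_sub_sq (hb : 0 < b) (x y : V) :
    Integrable fun t : V => (exp (-b * ‖x - t‖ ^ 2) - exp (-b * ‖y - t‖ ^ 2)) ^ 2 := by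
  refine (((integrable_exp_neg_mul_norm_sub_sq_mul_exp hb x x).sub
    ((integrable_exp_neg_mul_norm_sub_sq_mul_exp hb x y).const_mul 2)).add
    (integrable_exp_neg_mul_norm_sub_sq_mul_exp hb y y)).congr (ae_of_all _ fun t => ?_)
  simp only [Pi.add_apply, Pi.sub_apply]
  ring

theorem integral_sq_sub_exp_neg_mul_norm_sub_sq (hb : 0 < b) (x y : V) :
    ∫ t : V, (exp (-b * ‖x - t‖ ^ 2) - exp (-b * ‖y - t‖ ^ 2)) ^ 2
      = 2 * (π / (2 * b)) ^ (finrank ℝ V / 2 : ℝ) * (1 - exp (-(b / 2) * ‖x - y‖ ^ 2)) := by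
  have hint := integrable_exp_neg_mul_norm_sub_sq_mul_exp hb (V := V)
  have hexpand : ∀ t : V, (exp (-b * ‖x - t‖ ^ 2) - exp (-b * ‖y - t‖ ^ 2)) ^ 2
      = exp (-b * ‖x - t‖ ^ 2) * exp (-b * ‖x - t‖ ^ 2)
        - 2 * (exp (-b * ‖x - t‖ ^ 2) * exp (-b * ‖y - t‖ ^ 2))
        + exp (-b * ‖y - t‖ ^ 2) * exp (-b * ‖y - t‖ ^ 2) := fun t => by ring
  simp_rw [hexpand]
  rw [integral_add (by exact (hint x x).sub ((hint x y).const_mul 2)) (hint y y),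
    integral_sub (hint x x) ((hint x y).const_mul 2), integral_const_mul]
  simp only [integral_exp_neg_mul_norm_sub_sq_mul_exp hb, sub_self, norm_zero]
  norm_num
  ring

end Gaussian

section PowerFeature

variable {V : Type*} [NormedAddCommGroup V] [InnerProductSpace ℝ V] {q : ℝ}

/-- The exponent `β` of `s` solves `s ^ (2 * β) * s ^ (-dim V / 2) = s ^ (-1 - q)`, the factor
`s ^ (-dim V / 2)` coming from the Gaussian integral over `t`. -/
noncomputable def powerFeature (q : ℝ) (x : V) (z : ℝ × V) : ℝ :=
  z.1 ^ ((finrank ℝ V / 2 - 1 - q) / 2) * exp (-(2 * z.1) * ‖x - z.2‖ ^ 2)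

variable [MeasurableSpace V] [BorelSpace V]

theorem measurable_powerFeature (q : ℝ) (x : V) : Measurable (powerFeature q x) := by
  unfold powerFeature; fun_prop

variable [FiniteDimensional ℝ V]

theorem integral_sq_sub_powerFeature_slice {s : ℝ} (hs : 0 < s) (x y : V) :
    ∫ t : V, (powerFeature q x (s, t) - powerFeature q y (s, t)) ^ 2
      = 2 * (π / 4) ^ (finrank ℝ V / 2 : ℝ) * (s ^ (-1 - q) * (1 - exp (-(s * ‖x - y‖ ^ 2)))) := by
  simp only [powerFeature, ← mul_sub, mul_pow]
  rw [integral_const_mul, integral_sq_sub_exp_neg_mul_norm_sub_sq (by linarith) x y,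
    show π / (2 * (2 * s)) = π / 4 * s⁻¹ by field_simp; ring,
    mul_rpow (by positivity) (by positivity), inv_rpow hs.le, ← rpow_neg hs.le, ← rpow_natCast,
    ← rpow_mul hs.le, mul_div_cancel_left₀ s two_ne_zero]
  have hpow : s ^ ((finrank ℝ V / 2 - 1 - q) / 2 * (2 : ℕ)) * s ^ (-(finrank ℝ V / 2 : ℝ))
      = s ^ (-1 - q) := by
    rw [← rpow_add hs]; push_cast; ring_nf
  rw [← hpow, neg_mul]
  ring

theorem integrable_sq_sub_powerFeature (hq0 : 0 < q) (hq1 : q < 1) (x y : V) :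
    Integrable (fun z => (powerFeature q x z - powerFeature q y z) ^ 2)
      ((volume.restrict (Ioi 0)).prod volume) := by
  have hmeas : AEStronglyMeasurable (fun z => (powerFeature q x z - powerFeature q y z) ^ 2)
      ((volume.restrict (Ioi 0)).prod volume) :=
    (((measurable_powerFeature q x).sub (measurable_powerFeature q y)).pow_const
      2).aestronglyMeasurable
  refine (integrable_prod_iff hmeas).2 ⟨(ae_restrict_iff' measurableSet_Ioi).2 <|
    ae_of_all _ fun s (hs : 0 < s) => ?_, ?_⟩
  · refine ((integrable_sq_sub_exp_neg_mul_norm_sub_sq (by linarith : 0 < 2 * s) x y).const_mul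
      ((s ^ ((finrank ℝ V / 2 - 1 - q) / 2)) ^ 2)).congr (ae_of_all _ fun t => ?_)
    simp only [powerFeature]
    ring
  · refine (((integrableOn_rpow_mul_one_sub_exp hq0 hq1 (sq_nonneg ‖x - y‖)).const_mul
      (2 * (π / 4) ^ (finrank ℝ V / 2 : ℝ)))).congr <|
      (ae_restrict_iff' measurableSet_Ioi).2 <| ae_of_all _ fun s (hs : 0 < s) => ?_
    simp only [norm_pow, Real.norm_eq_abs, sq_abs, integral_sq_sub_powerFeature_slice hs]

theorem integral_sq_sub_powerFeature (hq0 : 0 < q) (hq1 : q < 1) (x y : V) :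
    ∫ z, (powerFeature q x z - powerFeature q y z) ^ 2 ∂(volume.restrict (Ioi 0)).prod volume
      = 2 * (π / 4) ^ (finrank ℝ V / 2 : ℝ) * oneSubExpIntegral q * ‖x - y‖ ^ (2 * q) := by
  rw [integral_prod _ (integrable_sq_sub_powerFeature hq0 hq1 x y),
    setIntegral_congr_fun measurableSet_Ioi fun s hs => integral_sq_sub_powerFeature_slice hs x y,
    integral_const_mul, integral_rpow_mul_one_sub_exp hq0.ne' (sq_nonneg _), ← rpow_natCast,
    ← rpow_mul (norm_nonneg _)]
  push_cast
  ring

theorem memLp_powerFeature_sub (hq0 : 0 < q) (hq1 : q < 1) (x y : V) :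
    MemLp (fun z => powerFeature q x z - powerFeature q y z) 2
      ((volume.restrict (Ioi 0)).prod volume) :=
  (memLp_two_iff_integrable_sq ((measurable_powerFeature q x).sub
    (measurable_powerFeature q y)).aestronglyMeasurable).2
    (integrable_sq_sub_powerFeature hq0 hq1 x y)

end PowerFeature

theorem power_is_schoenberg_general (q : ℝ) (hq0 : 0 < q) (hq1 : q < 1)
    (p n : ℕ) (x : Fin n → EuclideanSpace ℝ (Fin p)) :
    IsHilbertSqDistMatrix (fun i j => ‖x i - x j‖ ^ (2 * q)) := by
  set K := 2 * (π / 4) ^ (finrank ℝ (EuclideanSpace ℝ (Fin p)) / 2 : ℝ) * oneSubExpIntegral q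
  have hK : 0 < K := by have := oneSubExpIntegral_pos hq0 hq1; positivity
  have h := isHilbertSqDistMatrix_integral_sq_sub _ _
    (fun i => memLp_powerFeature_sub hq0 hq1 (x i) 0)
  simp only [sub_sub_sub_cancel_right, integral_sq_sub_powerFeature hq0 hq1] at h
  convert h.const_mul (inv_nonneg.2 hK.le) using 3 with i j
  exact (inv_mul_cancel_left₀ hK.ne' _).symm

/-- The power transformation `φ(D) = D^q`, `0 < q < 1`, is a Schoenberg
transformation: for every configuration of points in `ℝ^p` there are points of a real
Hilbert space with `‖y i - y j‖² = ‖x i - x j‖^(2q)`. -/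
theorem power_is_schoenberg (q : ℝ) (hq0 : 0 < q) (hq1 : q < 1)
    (p n : ℕ) (hp : 1 ≤ p) (x : Fin n → EuclideanSpace ℝ (Fin p)) :
    IsHilbertSqDistMatrix (fun i j => ‖x i - x j‖ ^ (2 * q)) :=
  power_is_schoenberg_general q hq0 hq1 p n x
end

section
/- Let μ be a nonnegative measure on (0,∞) with ∫ min(1, 1/λ) dμ(λ) < ∞ and define φ(D) = ∫_0^∞ (1 − exp(−λD))/λ dμ(λ). Then the right derivative of φ at 0 satisfies lim_{D→0⁺} φ(D)/D = μ((0,∞)) (finite or +∞); in particular φ is rectifiable (φ'(0) < ∞) if and only if μ((0,∞)) < ∞. Moreover lim_{D→∞} φ(D) = ∫_0^∞ (1/λ) dμ(λ) (finite or +∞); in particular φ is bounded if and only if ∫_0^∞ (1/λ) dμ(λ) < ∞. -/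
/-!
Write `s(x) = (1 - exp (-x)) / x`, so that the integrand of `φ(D) / D` is `s(λ D)`. Since
`1 - exp (-x)` is concave and vanishes at `0`, `s` decreases on `(0, ∞)` from `1` (its limit
at `0⁺`, the derivative of `1 - exp (-x)` at `0`). Hence `s(λ D)` increases to `1` as
`D → 0⁺`, while the integrand `(1 - exp (-λ D)) / λ` of `φ(D)` increases to `1 / λ` as
`D → ∞`. Monotone convergence gives both limits in `[0, ∞]`, and a nonnegative function
converges in `ℝ` exactly when its limit in `[0, ∞]` is finite.
-/

open MeasureTheory Set Filter Topology
open scoped ENNReal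
open Real

theorem tendsto_lintegral_atTop_of_monotone {α ι : Type*} [MeasurableSpace α] {μ : Measure α}
    [Preorder ι] [Nonempty ι] [IsDirectedOrder ι] [(atTop : Filter ι).IsCountablyGenerated]
    {f : ι → α → ℝ≥0∞} {F : α → ℝ≥0∞} (hf : ∀ i, AEMeasurable (f i) μ)
    (h_mono : ∀ᵐ x ∂μ, Monotone fun i => f i x)
    (h_tendsto : ∀ᵐ x ∂μ, Tendsto (fun i => f i x) atTop (𝓝 (F x))) :
    Tendsto (fun i => ∫⁻ x, f i x ∂μ) atTop (𝓝 (∫⁻ x, F x ∂μ)) := by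
  have h_int_mono : Monotone fun i => ∫⁻ x, f i x ∂μ := fun i j hij =>
    lintegral_mono_ae (h_mono.mono fun x hx => hx hij)
  obtain ⟨u, hu_mono, hu⟩ := exists_seq_monotone_tendsto_atTop_atTop ι
  have h_seq : Tendsto (fun n => ∫⁻ x, f (u n) x ∂μ) atTop (𝓝 (∫⁻ x, F x ∂μ)) :=
    lintegral_tendsto_of_tendsto_of_monotone (fun n => hf (u n))
      (h_mono.mono fun x hx => Monotone.comp hx hu_mono)
      (h_tendsto.mono fun x hx => hx.comp hu)
  rw [tendsto_nhds_unique h_seq ((tendsto_atTop_iSup h_int_mono).comp hu)]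
  exact tendsto_atTop_iSup h_int_mono

theorem exists_tendsto_iff_ne_top_of_tendsto_ofReal {α : Type*} {l : Filter α} [l.NeBot]
    {f : α → ℝ} {a : ℝ≥0∞} (hf : ∀ᶠ x in l, 0 ≤ f x)
    (h : Tendsto (fun x => ENNReal.ofReal (f x)) l (𝓝 a)) :
    (∃ c, Tendsto f l (𝓝 c)) ↔ a ≠ ⊤ := by
  refine ⟨fun ⟨c, hc⟩ => ?_, fun ha => ⟨a.toReal, ?_⟩⟩
  · rw [tendsto_nhds_unique h ((ENNReal.continuous_ofReal.tendsto c).comp hc)]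
    exact ENNReal.ofReal_ne_top
  · refine ((ENNReal.tendsto_toReal ha).comp h).congr' ?_
    filter_upwards [hf] with x hx using ENNReal.toReal_ofReal hx

theorem antitoneOn_one_sub_exp_neg_div : AntitoneOn (fun x => (1 - exp (-x)) / x) (Ioi 0) := by
  intro x hx y hy hxy
  have h_convex : ConvexOn ℝ univ (fun x => exp (-x)) := by
    simpa [Function.comp_def] using convexOn_exp.comp_affineMap (-(AffineMap.id ℝ ℝ))
  have h := h_convex.secant_mono (a := 0) (mem_univ _) (mem_univ _) (mem_univ _)
    (ne_of_gt hx) (ne_of_gt hy) hxy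
  simp only [exp_zero, neg_zero, sub_zero] at h
  rw [← neg_sub, ← neg_sub 1, neg_div, neg_div] at h
  simpa using neg_le_neg h

theorem tendsto_one_sub_exp_neg_div_nhdsGT_zero :
    Tendsto (fun x => (1 - exp (-x)) / x) (𝓝[>] 0) (𝓝 1) := by
  have h_deriv : HasDerivAt (fun x => exp (-x)) (-1) 0 := by
    simpa using (hasDerivAt_neg (0 : ℝ)).exp
  have h := (hasDerivAt_iff_tendsto_slope.mp h_deriv).neg.mono_left (nhdsGT_le_nhdsNE 0)
  rw [neg_neg] at h
  refine h.congr fun x => ?_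
  simp [slope_def_field, ← neg_div]

theorem one_sub_exp_neg_mul_div_nonneg {l D : ℝ} (hl : 0 ≤ l) (hD : 0 ≤ D) :
    0 ≤ (1 - exp (-(l * D))) / l :=
  div_nonneg (sub_nonneg.2 (exp_le_one_iff.2 (neg_nonpos.2 (mul_nonneg hl hD)))) hl

theorem one_sub_exp_neg_mul_div_le_max_mul_min {l : ℝ} (hl : 0 < l) (D : ℝ) :
    (1 - exp (-(l * D))) / l ≤ max 1 D * min 1 (1 / l) := by
  have h_num : 1 - exp (-(l * D)) ≤ min 1 (l * D) :=
    le_min (by linarith [exp_pos (-(l * D))]) (by linarith [add_one_le_exp (-(l * D))])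
  calc (1 - exp (-(l * D))) / l ≤ min 1 (l * D) / l := by gcongr
    _ = min (1 / l) D := by rw [← min_div_div_right hl.le, mul_div_cancel_left₀ _ hl.ne']
    _ ≤ max 1 D * min 1 (1 / l) := by
      rcases le_total l 1 with h | h
      · rw [min_eq_left ((le_div_iff₀ hl).2 (by linarith)), mul_one]
        exact (min_le_right _ _).trans (le_max_right _ _)
      · rw [min_eq_right ((div_le_one hl).2 h)]
        exact (min_le_left _ _).trans (le_mul_of_one_le_left (by positivity) (le_max_left _ _))

theorem integrable_one_sub_exp_neg_mul_div {μ : Measure ℝ}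
    (h_dom : Integrable (fun l => min 1 (1 / l)) (μ.restrict (Ioi 0))) {D : ℝ} (hD : 0 ≤ D) :
    Integrable (fun l => (1 - exp (-(l * D))) / l) (μ.restrict (Ioi 0)) := by
  refine (h_dom.const_mul (max 1 D)).mono' (Measurable.aestronglyMeasurable (by fun_prop)) ?_
  filter_upwards [ae_restrict_mem measurableSet_Ioi] with l hl
  rw [norm_of_nonneg (one_sub_exp_neg_mul_div_nonneg hl.le hD)]
  exact one_sub_exp_neg_mul_div_le_max_mul_min hl D

theorem tendsto_lintegral_one_sub_exp_neg_mul_div_atTop (μ : Measure ℝ) :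
    Tendsto (fun D => ∫⁻ l in Ioi 0, ENNReal.ofReal ((1 - exp (-(l * D))) / l) ∂μ) atTop
      (𝓝 (∫⁻ l in Ioi 0, ENNReal.ofReal (1 / l) ∂μ)) := by
  refine tendsto_lintegral_atTop_of_monotone (fun D => by fun_prop) ?_ ?_
  · filter_upwards [ae_restrict_mem measurableSet_Ioi] with l (hl : 0 < l) D₁ D₂ hD
    exact ENNReal.ofReal_le_ofReal (by gcongr)
  · filter_upwards [ae_restrict_mem measurableSet_Ioi] with l (hl : 0 < l)
    have h_exp : Tendsto (fun D => exp (-(l * D))) atTop (𝓝 0) :=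
      tendsto_exp_neg_atTop_nhds_zero.comp (tendsto_id.const_mul_atTop hl)
    refine ENNReal.tendsto_ofReal ?_
    simpa using (tendsto_const_nhds (x := (1 : ℝ))).sub h_exp |>.div_const l

theorem tendsto_lintegral_one_sub_exp_neg_mul_div_mul_nhdsGT_zero (μ : Measure ℝ) :
    Tendsto (fun D => ∫⁻ l in Ioi 0, ENNReal.ofReal ((1 - exp (-(l * D))) / (l * D)) ∂μ)
      (𝓝[>] 0) (𝓝 (μ (Ioi 0))) := by
  -- Substituting `D = exp (-t)` makes the integrand monotone in `t` over all of `ℝ`.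
  have h_exp : Tendsto (fun t => ∫⁻ l in Ioi 0,
      ENNReal.ofReal ((1 - exp (-(l * exp (-t)))) / (l * exp (-t))) ∂μ) atTop
      (𝓝 (∫⁻ _ in Ioi 0, 1 ∂μ)) := by
    refine tendsto_lintegral_atTop_of_monotone (fun t => by fun_prop) ?_ ?_
    · filter_upwards [ae_restrict_mem measurableSet_Ioi] with l (hl : 0 < l) t₁ t₂ ht
      refine ENNReal.ofReal_le_ofReal (antitoneOn_one_sub_exp_neg_div
        (mem_Ioi.2 (by positivity)) (mem_Ioi.2 (by positivity)) ?_)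
      gcongr
    · filter_upwards [ae_restrict_mem measurableSet_Ioi] with l (hl : 0 < l)
      have h_arg : Tendsto (fun t => l * exp (-t)) atTop (𝓝[>] 0) :=
        tendsto_nhdsWithin_iff.2 ⟨by simpa using tendsto_exp_neg_atTop_nhds_zero.const_mul l,
          Eventually.of_forall fun t => mem_Ioi.2 (by positivity)⟩
      simpa using ENNReal.tendsto_ofReal (tendsto_one_sub_exp_neg_div_nhdsGT_zero.comp h_arg)
  rw [setLIntegral_one] at h_exp
  refine (h_exp.comp (tendsto_neg_atBot_atTop.comp tendsto_log_nhdsGT_zero)).congr' ?_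
  filter_upwards [self_mem_nhdsWithin] with D (hD : 0 < D)
  simp [exp_log hD]

/-- Rectifiability and boundedness of a Schoenberg transformation
`φ(D) = ∫ (1 - exp (-λ D))/λ dμ(λ)` in terms of the measure `μ` on `(0,∞)`:
`φ(D)/D → μ((0,∞))` as `D → 0⁺` (finite or `+∞`, read in `ℝ≥0∞`), so `φ` is
rectifiable (has a finite right derivative at `0`) iff `μ((0,∞)) < ∞`; and
`φ(D) → ∫ (1/λ) dμ(λ)` as `D → ∞` (finite or `+∞`), so `φ` is bounded iff
`∫ (1/λ) dμ(λ) < ∞`. -/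
theorem schoenberg_rectifiable_bounded (μ : Measure ℝ)
    (hμ : ∫⁻ l in Ioi (0 : ℝ), ENNReal.ofReal (min 1 (1 / l)) ∂μ ≠ ⊤)
    (φ : ℝ → ℝ)
    (hφ : ∀ D : ℝ, φ D = ∫ l in Ioi (0 : ℝ), (1 - Real.exp (-(l * D))) / l ∂μ) :
    Tendsto (fun D => ENNReal.ofReal (φ D / D)) (𝓝[>] 0) (𝓝 (μ (Ioi 0))) ∧
    ((∃ c : ℝ, Tendsto (fun D => φ D / D) (𝓝[>] 0) (𝓝 c)) ↔ μ (Ioi 0) ≠ ⊤) ∧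
    Tendsto (fun D => ENNReal.ofReal (φ D)) atTop
      (𝓝 (∫⁻ l in Ioi (0 : ℝ), ENNReal.ofReal (1 / l) ∂μ)) ∧
    ((∃ c : ℝ, Tendsto φ atTop (𝓝 c)) ↔
      ∫⁻ l in Ioi (0 : ℝ), ENNReal.ofReal (1 / l) ∂μ ≠ ⊤) := by
  have h_dom : Integrable (fun l => min 1 (1 / l)) (μ.restrict (Ioi 0)) :=
    (lintegral_ofReal_ne_top_iff_integrable (by fun_prop) (ae_restrict_of_forall_mem
      measurableSet_Ioi fun l hl => le_min zero_le_one (one_div_pos.2 hl).le)).1 hμ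
  have h_nonneg (D : ℝ) (hD : 0 < D) :
      0 ≤ᵐ[μ.restrict (Ioi 0)] fun l => (1 - exp (-(l * D))) / l :=
    ae_restrict_of_forall_mem measurableSet_Ioi fun l hl =>
      one_sub_exp_neg_mul_div_nonneg (le_of_lt hl) hD.le
  have hφ_nonneg (D : ℝ) (hD : 0 < D) : 0 ≤ φ D := hφ D ▸ integral_nonneg_of_ae (h_nonneg D hD)
  have h_zero : Tendsto (fun D => ENNReal.ofReal (φ D / D)) (𝓝[>] 0) (𝓝 (μ (Ioi 0))) := by
    refine (tendsto_lintegral_one_sub_exp_neg_mul_div_mul_nhdsGT_zero μ).congr' ?_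
    filter_upwards [self_mem_nhdsWithin] with D (hD : 0 < D)
    simp_rw [hφ, ← integral_div, ← div_div]
    exact (ofReal_integral_eq_lintegral_ofReal
      ((integrable_one_sub_exp_neg_mul_div h_dom hD.le).div_const D)
      ((h_nonneg D hD).mono fun l hl => div_nonneg hl hD.le)).symm
  have h_top : Tendsto (fun D => ENNReal.ofReal (φ D)) atTop
      (𝓝 (∫⁻ l in Ioi (0 : ℝ), ENNReal.ofReal (1 / l) ∂μ)) := by
    refine (tendsto_lintegral_one_sub_exp_neg_mul_div_atTop μ).congr' ?_
    filter_upwards [eventually_gt_atTop 0] with D hD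
    rw [hφ, ofReal_integral_eq_lintegral_ofReal
      (integrable_one_sub_exp_neg_mul_div h_dom hD.le) (h_nonneg D hD)]
  exact ⟨h_zero, exists_tendsto_iff_ne_top_of_tendsto_ofReal (eventually_mem_nhdsWithin.mono
      fun D hD => div_nonneg (hφ_nonneg D hD) (le_of_lt hD)) h_zero,
    h_top, exists_tendsto_iff_ne_top_of_tendsto_ofReal
      ((eventually_gt_atTop 0).mono hφ_nonneg) h_top⟩
end

section
/- Let 0 < q < 1/2, let x_1,...,x_n be distinct real numbers and f_1,...,f_n > 0 with Σ_i f_i = 1. Then every global minimizer a of the function Γ(a) = Σ_i f_i |x_i − a|^{2q} over ℝ equals one of the observations: a = x_{i₀} for some index i₀. -/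
open Finset

private lemma rpow_midpoint {p u h : ℝ} (hp0 : 0 < p) (hp1 : p < 1)
    (hh : 0 < h) (hu : h < u) :
    (u - h) ^ p + (u + h) ^ p < 2 * u ^ p := by
  have key := (Real.strictConcaveOn_rpow hp0 hp1).2
    (show (u - h : ℝ) ∈ Set.Ici (0:ℝ) by simp; linarith)
    (show (u + h : ℝ) ∈ Set.Ici (0:ℝ) by simp; linarith)
    (show (u - h : ℝ) ≠ u + h by intro hc; nlinarith)
    (show (0:ℝ) < 1/2 by norm_num) (show (0:ℝ) < 1/2 by norm_num) (by norm_num)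
  simp only [smul_eq_mul] at key
  have he : (1/2 : ℝ) * (u - h) + (1/2 : ℝ) * (u + h) = u := by ring
  rw [he] at key
  linarith

/-- **Power transformation, concentrated regime.** For `0 < q < 1/2`, distinct reals
`x 1, ..., x n` and positive weights summing to `1`, every global minimizer of
`Γ(a) = ∑ i, f i * |x i - a| ^ (2 q)` equals one of the observations. -/
theorem power_transform_concentrated {n : ℕ} (q : ℝ) (hq0 : 0 < q) (hq : q < 1 / 2)
    (x : Fin n → ℝ) (hx : Function.Injective x)
    (f : Fin n → ℝ) (hf : ∀ i, 0 < f i) (hsum : ∑ i, f i = 1)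
    (a : ℝ)
    (ha : ∀ b : ℝ, ∑ i, f i * |x i - a| ^ (2 * q) ≤ ∑ i, f i * |x i - b| ^ (2 * q)) :
    ∃ i₀, a = x i₀ := by
  by_contra hcon
  push_neg at hcon
  have hn : Nonempty (Fin n) := by
    by_contra hne
    simp [not_nonempty_iff.mp hne] at hsum
  have hne : (Finset.univ : Finset (Fin n)).Nonempty := Finset.univ_nonempty
  set m := Finset.univ.inf' hne (fun i => |x i - a|) with hm
  have hm0 : 0 < m := by
    rw [hm, Finset.lt_inf'_iff]
    intro i _
    have : x i - a ≠ 0 := fun hc => hcon i (by linarith [sub_eq_zero.mp hc])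
    exact abs_pos.mpr this
  set h := m / 2 with hhdef
  have hh0 : 0 < h := by positivity
  have p := 2 * q
  have hp0 : 0 < 2 * q := by linarith
  have hp1 : 2 * q < 1 := by linarith
  -- For each i, strict midpoint concavity
  have key : ∀ i : Fin n,
      f i * |x i - (a + h)| ^ (2*q) + f i * |x i - (a - h)| ^ (2*q)
        < 2 * (f i * |x i - a| ^ (2*q)) := by
    intro i
    have hmu : m ≤ |x i - a| := Finset.inf'_le _ (Finset.mem_univ i)
    have hu : h < |x i - a| := by
      rw [hhdef]; linarith
    have hsum2 : |x i - (a + h)| ^ (2*q) + |x i - (a - h)| ^ (2*q)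
        = (|x i - a| - h) ^ (2*q) + (|x i - a| + h) ^ (2*q) := by
      rcases lt_or_gt_of_ne (fun hc : x i = a => hcon i hc.symm) with hlt | hgt
      · have hu' : |x i - a| = a - x i := by rw [abs_of_neg (by linarith)]; ring
        rw [hu']
        have h1 : |x i - (a + h)| = (a - x i) + h := by
          rw [abs_of_neg (by linarith)]; ring
        have h2 : |x i - (a - h)| = (a - x i) - h := by
          rw [hu'] at hu
          rw [abs_of_neg (by linarith)]; ring
        rw [h1, h2]; try ring
      · have hu' : |x i - a| = x i - a := by rw [abs_of_pos (by linarith)]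
        rw [hu'] at hu ⊢
        have h1 : |x i - (a + h)| = (x i - a) - h := by
          rw [abs_of_pos (by linarith)]; ring
        have h2 : |x i - (a - h)| = (x i - a) + h := by
          rw [abs_of_pos (by linarith)]; ring
        rw [h1, h2]; try ring
    have hlt := rpow_midpoint hp0 hp1 hh0 hu
    have hfi := hf i
    calc f i * |x i - (a + h)| ^ (2*q) + f i * |x i - (a - h)| ^ (2*q)
        = f i * (|x i - (a + h)| ^ (2*q) + |x i - (a - h)| ^ (2*q)) := by ring
      _ = f i * ((|x i - a| - h) ^ (2*q) + (|x i - a| + h) ^ (2*q)) := by rw [hsum2]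
      _ < f i * (2 * |x i - a| ^ (2*q)) := by
          exact mul_lt_mul_of_pos_left hlt hfi
      _ = 2 * (f i * |x i - a| ^ (2*q)) := by ring
  have hsumlt : (∑ i, f i * |x i - (a + h)| ^ (2*q)) + (∑ i, f i * |x i - (a - h)| ^ (2*q))
      < 2 * ∑ i, f i * |x i - a| ^ (2*q) := by
    rw [← Finset.sum_add_distrib, Finset.mul_sum]
    exact Finset.sum_lt_sum_of_nonempty hne (fun i _ => key i)
  have h1 := ha (a + h)
  have h2 := ha (a - h)
  linarith
end

section
/- Let h : [0,∞) → ℝ be infinitely differentiable on (0,∞) and continuous at 0, with h(0) = 0, lim_{D→∞} h(D) = 1, h'(D) > 0 for D > 0, and the Schoenberg sign pattern h^{(2r−1)} ≥ 0, h^{(2r)} ≤ 0 on (0,∞) for all r ≥ 1. Let x_1,...,x_n be distinct points of ℝ^p and f_1,...,f_n > 0 with Σ_i f_i = 1, and for δ > 0 define Γ_δ(a) = Σ_i f_i h(‖x_i − a‖²/δ). Then for every ε > 0 with 2ε < min_{i≠j} ‖x_i − x_j‖, there exists a finite δ₀ > 0 such that for every 0 < δ ≤ δ₀ and every index i, the function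 Γ_δ possesses a local minimizer a_i with ‖a_i − x_i‖ < ε; in particular Γ_δ has at least n distinct local minima. -/
/-!
Once `δ` is so small that `h ≈ 1` beyond `ε² / δ`, the transformed inertia is `≈ ∑ f = 1` at
every point at distance at least `ε` from all observations, in particular on the sphere of
radius `ε` about `x i`, while at `x i` itself it is `≈ 1 - f i` because `h 0 = 0`. So the
minimum of `Γ_δ` over the closed ball about `x i` is attained in the open ball, where it is a
local minimum.
-/

open Finset Set Filter Topology Metric

lemma continuousOn_Ici_of_continuousOn_Ioi {h : ℝ → ℝ} {c : ℝ}
    (hc : ContinuousWithinAt h (Ici c) c) (hIoi : ContinuousOn h (Ioi c)) :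
    ContinuousOn h (Ici c) := by
  intro t ht
  rcases (mem_Ici.1 ht).eq_or_lt with rfl | hct
  · exact hc
  · exact (hIoi.continuousAt (isOpen_Ioi.mem_nhds hct)).continuousWithinAt

lemma exists_pos_forall_le_of_eventually_nhdsGT {Q : ℝ → Prop} (hQ : ∀ᶠ δ in 𝓝[>] 0, Q δ) :
    ∃ δ₀, 0 < δ₀ ∧ ∀ δ, 0 < δ → δ ≤ δ₀ → Q δ := by
  obtain ⟨δ₀, hδ₀, hsub⟩ := mem_nhdsGT_iff_exists_Ioc_subset.1 hQ
  exact ⟨δ₀, hδ₀, fun δ hδ hle => hsub ⟨hδ, hle⟩⟩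

lemma eventually_nhdsGT_forall_div_le {P : ℝ → Prop} (hP : ∀ᶠ t in atTop, P t) {c : ℝ}
    (hc : 0 < c) : ∀ᶠ δ in 𝓝[>] 0, ∀ t, c / δ ≤ t → P t := by
  obtain ⟨T, hT⟩ := eventually_atTop.1 hP
  have hdiv : Tendsto (fun δ : ℝ => c / δ) (𝓝[>] 0) atTop := by
    simpa only [div_eq_mul_inv] using tendsto_inv_nhdsGT_zero.const_mul_atTop hc
  filter_upwards [hdiv.eventually_ge_atTop T] with δ hδ t ht using hT t (hδ.trans ht)

lemma le_norm_sub_of_mem_sphere {ι E : Type*} [NormedAddCommGroup E] {x : ι → E} {i : ι}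
    {ε : ℝ} (hsep : ∀ j ≠ i, 2 * ε < ‖x j - x i‖) {b : E} (hb : b ∈ sphere (x i) ε) (j : ι) :
    ε ≤ ‖x j - b‖ := by
  rw [mem_sphere_iff_norm] at hb
  by_cases hji : j = i
  · rw [hji, norm_sub_rev, hb]
  · have := norm_sub_le_norm_sub_add_norm_sub (x j) b (x i)
    linarith [hsep j hji]

section TransformedInertia

variable {ι E : Type*} [Fintype ι] [NormedAddCommGroup E]
  {h : ℝ → ℝ} {x : ι → E} {f : ι → ℝ} {δ : ℝ}

variable (h x f δ) in
noncomputable def transformedInertia (b : E) : ℝ :=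
  ∑ j, f j * h (‖x j - b‖ ^ 2 / δ)

theorem continuous_transformedInertia (hh : ContinuousOn h (Ici 0)) (hδ : 0 ≤ δ) :
    Continuous (transformedInertia h x f δ) :=
  continuous_finsetSum _ fun _ _ => continuous_const.mul <|
    hh.comp_continuous (by fun_prop) fun _ => div_nonneg (sq_nonneg _) hδ

theorem transformedInertia_self_le (h0 : h 0 = 0) (hf : ∀ j, 0 ≤ f j) {i : ι} {M : ℝ}
    (hM : ∀ j ≠ i, h (‖x j - x i‖ ^ 2 / δ) ≤ M) :
    transformedInertia h x f δ (x i) ≤ M * (∑ j, f j - f i) := by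
  classical
  rw [transformedInertia, ← add_sum_erase _ _ (mem_univ i), ← add_sum_erase _ _ (mem_univ i),
    sub_self, norm_zero, zero_pow two_ne_zero, zero_div, h0, mul_zero, zero_add,
    add_sub_cancel_left, mul_sum]
  refine sum_le_sum fun j hj => ?_
  rw [mul_comm M]
  exact mul_le_mul_of_nonneg_left (hM j (ne_of_mem_erase hj)) (hf j)

theorem le_transformedInertia (hf : ∀ j, 0 ≤ f j) {b : E} {m : ℝ}
    (hm : ∀ j, m ≤ h (‖x j - b‖ ^ 2 / δ)) :
    m * ∑ j, f j ≤ transformedInertia h x f δ b := by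
  rw [mul_sum]
  refine sum_le_sum fun j _ => ?_
  rw [mul_comm m]
  exact mul_le_mul_of_nonneg_left (hm j) (hf j)

theorem exists_isLocalMin_transformedInertia_mem_ball [ProperSpace E]
    (hh : ContinuousOn h (Ici 0)) (h0 : h 0 = 0) (hf : ∀ j, 0 ≤ f j) (hsum : ∑ j, f j = 1)
    {i : ι} {ε η : ℝ} (hε : 0 ≤ ε) (hδ : 0 < δ) (hη : 2 * η < f i)
    (hsep : ∀ j ≠ i, 2 * ε < ‖x j - x i‖) (hfar : ∀ t, ε ^ 2 / δ ≤ t → |h t - 1| ≤ η) :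
    ∃ a ∈ ball (x i) ε, IsLocalMin (transformedInertia h x f δ) a := by
  have hfar' : ∀ b j, ε ≤ ‖x j - b‖ → |h (‖x j - b‖ ^ 2 / δ) - 1| ≤ η := fun b j hj =>
    hfar _ (by gcongr)
  have hη0 : 0 ≤ η := (abs_nonneg _).trans (hfar _ le_rfl)
  have hcenter : transformedInertia h x f δ (x i) ≤ (1 + η) * (1 - f i) := by
    rw [← hsum]
    refine transformedInertia_self_le h0 hf fun j hj => ?_
    have hj : ε ≤ ‖x j - x i‖ := by linarith [hsep j hj]
    linarith [(abs_le.1 (hfar' (x i) j hj)).2]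
  refine exists_isLocalMin_mem_ball (continuous_transformedInertia hh hδ.le).continuousOn
    (mem_closedBall_self hε) fun b hb => ?_
  have hsphere : (1 - η) * ∑ j, f j ≤ transformedInertia h x f δ b :=
    le_transformedInertia hf fun j =>
      by linarith [(abs_le.1 (hfar' b j (le_norm_sub_of_mem_sphere hsep hb j))).1]
  rw [hsum, mul_one] at hsphere
  nlinarith [mul_nonneg (hf i) hη0]

end TransformedInertia

theorem bounded_transform_n_local_minima_general {p n : ℕ} (h : ℝ → ℝ)
    (hsmooth : ContDiffOn ℝ (⊤ : ℕ∞) h (Ioi 0))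
    (hcont : ContinuousWithinAt h (Ici 0) 0)
    (h0 : h 0 = 0)
    (hinf : Tendsto h atTop (𝓝 1))
    (x : Fin n → EuclideanSpace ℝ (Fin p))
    (f : Fin n → ℝ) (hf : ∀ i, 0 < f i) (hsum : ∑ i, f i = 1)
    (ε : ℝ) (hε : 0 < ε) (hsep : ∀ i j, i ≠ j → 2 * ε < ‖x i - x j‖) :
    ∃ δ₀ : ℝ, 0 < δ₀ ∧ ∀ δ : ℝ, 0 < δ → δ ≤ δ₀ → ∀ i,
      ∃ a : EuclideanSpace ℝ (Fin p), ‖a - x i‖ < ε ∧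
        IsLocalMin (fun b => ∑ j, f j * h (‖x j - b‖ ^ 2 / δ)) a := by
  have hh : ContinuousOn h (Ici 0) :=
    continuousOn_Ici_of_continuousOn_Ioi hcont hsmooth.continuousOn
  have hnear : ∀ i, ∀ᶠ t in atTop, |h t - 1| ≤ f i / 3 := fun i =>
    hinf.eventually (closedBall_mem_nhds 1 (by linarith [hf i]))
  have hsmall : ∀ᶠ δ in 𝓝[>] 0, ∀ i, ∀ t, ε ^ 2 / δ ≤ t → |h t - 1| ≤ f i / 3 :=
    eventually_all.2 fun i => eventually_nhdsGT_forall_div_le (hnear i) (by positivity)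
  obtain ⟨δ₀, hδ₀, hδ₀small⟩ := exists_pos_forall_le_of_eventually_nhdsGT hsmall
  refine ⟨δ₀, hδ₀, fun δ hδ hle i => ?_⟩
  obtain ⟨a, ha, hmin⟩ := exists_isLocalMin_transformedInertia_mem_ball hh h0
    (fun j => (hf j).le) hsum hε.le hδ (by linarith [hf i]) (fun j hj => hsep j i hj)
    (hδ₀small δ hδ hle i)
  exact ⟨a, mem_ball_iff_norm.1 ha, hmin⟩

/-- **Theorem 4 (bounded transformations).** Let `h : [0,∞) → ℝ` be infinitely
differentiable on `(0,∞)`, continuous at `0`, with `h 0 = 0`, `h(∞) = 1`, `h' > 0` on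
`(0,∞)` and the Schoenberg sign pattern on `(0,∞)`. Let `x 1, ..., x n` be distinct
points of `ℝ^p` with positive weights summing to `1`, and
`Γ_δ(a) = ∑ i, f i * h (‖x i - a‖²/δ)`. For every `ε > 0` with
`2ε < min_{i ≠ j} ‖x i - x j‖` there is a finite `δ₀ > 0` such that for every
`0 < δ ≤ δ₀` and every index `i`, `Γ_δ` has a local minimizer within distance `ε`
of `x i`; in particular `Γ_δ` has at least `n` distinct local minima. -/
theorem bounded_transform_n_local_minima {p n : ℕ} (h : ℝ → ℝ)
    (hsmooth : ContDiffOn ℝ (⊤ : ℕ∞) h (Ioi 0))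
    (hcont : ContinuousWithinAt h (Ici 0) 0)
    (h0 : h 0 = 0)
    (hinf : Tendsto h atTop (𝓝 1))
    (hpos : ∀ D : ℝ, 0 < D → 0 < iteratedDerivWithin 1 h (Ioi 0) D)
    (hsign : ∀ r : ℕ, 1 ≤ r → ∀ D : ℝ, 0 < D →
      0 ≤ iteratedDerivWithin (2 * r - 1) h (Ioi 0) D ∧
        iteratedDerivWithin (2 * r) h (Ioi 0) D ≤ 0)
    (x : Fin n → EuclideanSpace ℝ (Fin p)) (hx : Function.Injective x)
    (f : Fin n → ℝ) (hf : ∀ i, 0 < f i) (hsum : ∑ i, f i = 1)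
    (ε : ℝ) (hε : 0 < ε) (hsep : ∀ i j, i ≠ j → 2 * ε < ‖x i - x j‖) :
    ∃ δ₀ : ℝ, 0 < δ₀ ∧ ∀ δ : ℝ, 0 < δ → δ ≤ δ₀ → ∀ i,
      ∃ a : EuclideanSpace ℝ (Fin p), ‖a - x i‖ < ε ∧
        IsLocalMin (fun b => ∑ j, f j * h (‖x j - b‖ ^ 2 / δ)) a :=
  bounded_transform_n_local_minima_general h hsmooth hcont h0 hinf x f hf hsum ε hε hsep
end
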